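/- arXiv:2409.00298 — 5 statements merged into one kernel-verified Lean document; each statement's English description precedes it below -/
import Mathlib

section
/- Let ρ, O_V, O_H, κ be positive real numbers. Define f : ℝ → ℝ by f(λ) = ρ·((1−λ)·O_H + λ·O_V) + ρ²·λ·(1−λ)·O_H·O_V·κ, let λ₀ = 1/2 + (O_V − O_H)/(2·ρ·κ·O_V·O_H), and let λ* = max(0, min(1, λ₀)). Then for every λ ∈ [0,1], log₂(1 + f(λ)) ≤ log₂(1 + f(λ*)). -/
theorem stmt_6 (ρ O_V O_H κ : ℝ) (hρ : 0 < ρ) (hV : 0 < O_V) (hH : 0 < O_H) (hκ : 0 < κ) :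
    ∀ lam ∈ Set.Icc (0 : ℝ) 1,
      Real.logb 2 (1 + (ρ * ((1 - lam) * O_H + lam * O_V) +
          ρ ^ 2 * lam * (1 - lam) * O_H * O_V * κ)) ≤
      Real.logb 2 (1 + (ρ * ((1 - max 0 (min 1 (1 / 2 + (O_V - O_H) / (2 * ρ * κ * O_V * O_H)))) * O_H +
          max 0 (min 1 (1 / 2 + (O_V - O_H) / (2 * ρ * κ * O_V * O_H))) * O_V) +
          ρ ^ 2 * max 0 (min 1 (1 / 2 + (O_V - O_H) / (2 * ρ * κ * O_V * O_H))) *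
            (1 - max 0 (min 1 (1 / 2 + (O_V - O_H) / (2 * ρ * κ * O_V * O_H)))) * O_H * O_V * κ)) := by
  rintro lam ⟨h0, h1⟩
  set lam0 : ℝ := 1 / 2 + (O_V - O_H) / (2 * ρ * κ * O_V * O_H) with hlam0
  set s : ℝ := max 0 (min 1 lam0) with hs
  have hs0 : 0 ≤ s := le_max_left _ _
  have hs1 : s ≤ 1 := max_le zero_le_one (min_le_left _ _)
  have key : (lam0 - s) ^ 2 ≤ (lam0 - lam) ^ 2 := by
    rcases le_total lam0 0 with h | h
    · have hmin : min 1 lam0 ≤ 0 := le_trans (min_le_right _ _) h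
      have : s = 0 := by simp [hs, max_eq_left hmin]
      rw [this]; nlinarith
    · rcases le_total 1 lam0 with h' | h'
      · have : s = 1 := by
          rw [hs, min_eq_left h']; simp
        rw [this]; nlinarith
      · have : s = lam0 := by
          rw [hs, min_eq_right h', max_eq_right h]
        rw [this]
        nlinarith [sq_nonneg (lam0 - lam)]
  have ha : (0:ℝ) < ρ ^ 2 * O_H * O_V * κ := by positivity
  have hden : (2 * ρ * κ * O_V * O_H) ≠ 0 := by positivity
  have hvertex : ρ * (O_V - O_H) + ρ ^ 2 * O_H * O_V * κ
      = 2 * (ρ ^ 2 * O_H * O_V * κ) * lam0 := by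
    rw [hlam0]; field_simp; ring
  have heq : (ρ * ((1 - s) * O_H + s * O_V) + ρ ^ 2 * s * (1 - s) * O_H * O_V * κ)
      - (ρ * ((1 - lam) * O_H + lam * O_V) + ρ ^ 2 * lam * (1 - lam) * O_H * O_V * κ)
      = (ρ ^ 2 * O_H * O_V * κ) * ((lam0 - lam) ^ 2 - (lam0 - s) ^ 2) := by
    linear_combination (s - lam) * hvertex
  have hf : ρ * ((1 - lam) * O_H + lam * O_V) + ρ ^ 2 * lam * (1 - lam) * O_H * O_V * κ
      ≤ ρ * ((1 - s) * O_H + s * O_V) + ρ ^ 2 * s * (1 - s) * O_H * O_V * κ := by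
    nlinarith [mul_le_mul_of_nonneg_left key ha.le]
  have hpos : (0:ℝ) < 1 + (ρ * ((1 - lam) * O_H + lam * O_V) +
      ρ ^ 2 * lam * (1 - lam) * O_H * O_V * κ) := by
    nlinarith [mul_nonneg (mul_nonneg (mul_nonneg (mul_nonneg (mul_nonneg (sq_nonneg ρ) h0) (by linarith : (0:ℝ) ≤ 1 - lam)) hH.le) hV.le) hκ.le,
      mul_nonneg hρ.le (add_nonneg (mul_nonneg (by linarith : (0:ℝ) ≤ 1 - lam) hH.le) (mul_nonneg h0 hV.le))]
  exact Real.logb_le_logb_of_le one_lt_two hpos (by linarith)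
end

section
/- Let ρ, O_V, O_H, λ_V, λ_H be positive real numbers, and define C : ℝ → ℝ by C(l) = log₂(1 + ρ·(λ_H·O_H + λ_V·O_V) + ρ²·λ_H·λ_V·O_H·O_V·(l² + (1−l)²)). Then for every l ∈ [0,1], C(1/2) ≤ C(l) ≤ C(0), and moreover C(0) = C(1). -/
theorem stmt_9 (ρ O_V O_H lV lH : ℝ)
    (hρ : 0 < ρ) (hV : 0 < O_V) (hH : 0 < O_H) (hlV : 0 < lV) (hlH : 0 < lH)
    (C : ℝ → ℝ)
    (hC : ∀ l : ℝ, C l = Real.logb 2 (1 + ρ * (lH * O_H + lV * O_V) +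
        ρ ^ 2 * lH * lV * O_H * O_V * (l ^ 2 + (1 - l) ^ 2))) :
    (∀ l ∈ Set.Icc (0 : ℝ) 1, C (1 / 2) ≤ C l ∧ C l ≤ C 0) ∧ C 0 = C 1 := by
  have hK : 0 < ρ ^ 2 * lH * lV * O_H * O_V := by positivity
  have hA : 0 < 1 + ρ * (lH * O_H + lV * O_V) := by positivity
  constructor
  · intro l hl
    obtain ⟨h0, h1⟩ := hl
    have hq1 : (1:ℝ)/2 ≤ l ^ 2 + (1 - l) ^ 2 := by nlinarith [sq_nonneg (2*l-1)]
    have hq2 : l ^ 2 + (1 - l) ^ 2 ≤ 1 := by nlinarith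
    have hp : 0 < 1 + ρ * (lH * O_H + lV * O_V) +
        ρ ^ 2 * lH * lV * O_H * O_V * ((1/2) ^ 2 + (1 - 1/2) ^ 2) := by positivity
    rw [hC, hC, hC]
    constructor
    · exact Real.logb_le_logb_of_le (by norm_num) hp (by nlinarith)
    · exact Real.logb_le_logb_of_le (by norm_num) (by nlinarith) (by nlinarith)
  · rw [hC, hC]; norm_num
end

section
/- Let A be a 2×2 complex positive semidefinite Hermitian matrix with det A ≠ 0. Then the function ρ ↦ log₂((det(I₂ + ρ•A)).re) / log₂ ρ tends to 2 as the real number ρ tends to +∞. -/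
open Matrix Filter
open scoped ComplexOrder

theorem stmt_10 (A : Matrix (Fin 2) (Fin 2) ℂ) (hA : A.PosSemidef) (hdet : A.det ≠ 0) :
    Tendsto (fun ρ : ℝ => Real.logb 2 (((1 + ρ • A).det).re) / Real.logb 2 ρ) atTop
      (nhds 2) := by
  have hH := hA.isHermitian
  set t : ℝ := (A 0 0).re + (A 1 1).re with ht_def
  set d : ℝ := (A.det).re with hd_def
  -- det A is a positive real
  have hdet_eq : A.det = ((∏ i, hH.eigenvalues i : ℝ) : ℂ) := by
    rw [hH.det_eq_prod_eigenvalues]; push_cast; rfl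
  have hprod_ne : (∏ i, hH.eigenvalues i) ≠ 0 := by
    intro h; apply hdet; rw [hdet_eq, h]; simp
  have hprod_nonneg : 0 ≤ ∏ i, hH.eigenvalues i :=
    Finset.prod_nonneg fun i _ => hA.eigenvalues_nonneg i
  have hd : 0 < d := by
    rw [hd_def, hdet_eq, Complex.ofReal_re]
    exact lt_of_le_of_ne hprod_nonneg (Ne.symm hprod_ne)
  -- the real part of det (1 + ρ • A)
  have hre : ∀ ρ : ℝ, ((1 + ρ • A).det).re = 1 + ρ * t + ρ ^ 2 * d := by
    intro ρ
    have hd2 : d = (A 0 0).re * (A 1 1).re - (A 0 0).im * (A 1 1).im -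
        ((A 0 1).re * (A 1 0).re - (A 0 1).im * (A 1 0).im) := by
      rw [hd_def, Matrix.det_fin_two]
      simp [Complex.sub_re, Complex.mul_re]
    rw [ht_def, hd2]
    simp [Matrix.det_fin_two, Matrix.add_apply, Matrix.one_apply, Matrix.smul_apply,
      Complex.add_re, Complex.sub_re, Complex.mul_re, Complex.real_smul,
      Complex.ofReal_re, Complex.ofReal_im]
    ring
  -- the rescaled argument tends to d
  have hlim1 : Tendsto (fun ρ : ℝ => (1 + ρ * t + ρ ^ 2 * d) / ρ ^ 2) atTop (nhds d) := by
    have hcong : ∀ᶠ ρ : ℝ in atTop, (1 + ρ * t + ρ ^ 2 * d) / ρ ^ 2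
        = ρ⁻¹ * ρ⁻¹ + t * ρ⁻¹ + d := by
      filter_upwards [eventually_ne_atTop (0 : ℝ)] with ρ hρ
      field_simp
    rw [tendsto_congr' hcong]
    have h0 : Tendsto (fun ρ : ℝ => ρ⁻¹) atTop (nhds 0) := tendsto_inv_atTop_zero
    have := ((h0.mul h0).add (h0.const_mul t)).add_const d
    simpa [mul_comm] using this
  have hM : Tendsto (fun ρ : ℝ => Real.logb 2 ((1 + ρ * t + ρ ^ 2 * d) / ρ ^ 2)) atTop
      (nhds (Real.logb 2 d)) := by
    have hcont : ContinuousAt (Real.logb 2) d := by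
      unfold Real.logb
      exact (Real.continuousAt_log hd.ne').div_const _
    exact hcont.tendsto.comp hlim1
  have hL : Tendsto (fun ρ : ℝ => Real.logb 2 ρ) atTop atTop :=
    Real.tendsto_logb_atTop one_lt_two
  have hquot : Tendsto (fun ρ : ℝ =>
      Real.logb 2 ((1 + ρ * t + ρ ^ 2 * d) / ρ ^ 2) / Real.logb 2 ρ) atTop (nhds 0) :=
    hM.div_atTop hL
  have hpos_ev : ∀ᶠ ρ : ℝ in atTop, 0 < (1 + ρ * t + ρ ^ 2 * d) / ρ ^ 2 :=
    hlim1.eventually (eventually_gt_nhds hd)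
  have hkey : ∀ᶠ ρ : ℝ in atTop,
      Real.logb 2 (((1 + ρ • A).det).re) / Real.logb 2 ρ
        = 2 + Real.logb 2 ((1 + ρ * t + ρ ^ 2 * d) / ρ ^ 2) / Real.logb 2 ρ := by
    filter_upwards [eventually_gt_atTop (1 : ℝ), hpos_ev] with ρ hρ1 hpos
    have hρ0 : ρ ≠ 0 := by positivity
    have hρ2 : (ρ : ℝ) ^ 2 ≠ 0 := pow_ne_zero _ hρ0
    have hlogρ : Real.logb 2 ρ ≠ 0 := (Real.logb_pos one_lt_two hρ1).ne'
    have harg : ((1 + ρ • A).det).re = ρ ^ 2 * ((1 + ρ * t + ρ ^ 2 * d) / ρ ^ 2) := by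
      rw [hre ρ]; field_simp
    rw [harg, Real.logb_mul hρ2 (ne_of_gt hpos), Real.logb_pow, add_div,
      mul_div_assoc, div_self hlogρ, mul_one]
    norm_num
  rw [tendsto_congr' hkey]
  have := (tendsto_const_nhds (x := (2 : ℝ)) (f := atTop)).add hquot
  simpa using this
end

section
/- Let ρ, O_V, O_H be positive real numbers and set a = ρ²·O_V·(O_H/2 − O_V), b = ρ²·O_V·(2·O_V − O_H/2) + 2·ρ·O_V, c = ρ²·O_V·(O_H/4 − O_V) + ρ·(O_H/2 − 3·O_V/2). Assume a < 0 and c < 0. Then b² − 4·a·c > 0, the number l_th = (−b + √(b² − 4·a·c))/(2·a) satisfies 0 < l_th < 1, and for every l with l_th < l ≤ 1, log₂(1 + ρ·(O_H + O_V)/2 + ρ²·O_H·O_V·(l² + (1−l)²)/4) > 2·log₂(1 + ρ·(1−l)·O_V). -/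
set_option maxHeartbeats 1000000 in
theorem stmt_14 (ρ O_V O_H a b c : ℝ) (hρ : 0 < ρ) (hV : 0 < O_V) (hH : 0 < O_H)
    (ha_def : a = ρ ^ 2 * O_V * (O_H / 2 - O_V))
    (hb_def : b = ρ ^ 2 * O_V * (2 * O_V - O_H / 2) + 2 * ρ * O_V)
    (hc_def : c = ρ ^ 2 * O_V * (O_H / 4 - O_V) + ρ * (O_H / 2 - 3 * O_V / 2))
    (ha : a < 0) (hc : c < 0) :
    0 < b ^ 2 - 4 * a * c ∧
    (0 < (-b + Real.sqrt (b ^ 2 - 4 * a * c)) / (2 * a) ∧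
      (-b + Real.sqrt (b ^ 2 - 4 * a * c)) / (2 * a) < 1) ∧
    ∀ l : ℝ, (-b + Real.sqrt (b ^ 2 - 4 * a * c)) / (2 * a) < l → l ≤ 1 →
      Real.logb 2 (1 + ρ * (O_H + O_V) / 2 +
          ρ ^ 2 * O_H * O_V * (l ^ 2 + (1 - l) ^ 2) / 4) >
        2 * Real.logb 2 (1 + ρ * (1 - l) * O_V) := by
  have hg1 : 0 < a + b + c := by
    have h1 : 0 < ρ * O_V := mul_pos hρ hV
    have h2 : 0 < ρ * O_H := mul_pos hρ hH
    have h3 : 0 < ρ ^ 2 * O_V * O_H := by positivity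
    nlinarith
  have hD : 0 < b ^ 2 - 4 * a * c := by
    nlinarith [sq_nonneg (2 * a + b), mul_pos (neg_pos.2 ha) hg1]
  set s := Real.sqrt (b ^ 2 - 4 * a * c) with hs_def
  have hs0 : 0 ≤ s := Real.sqrt_nonneg _
  have hs2 : s ^ 2 = b ^ 2 - 4 * a * c := Real.sq_sqrt hD.le
  have hb : 0 < b := by nlinarith
  have h2a : 2 * a < 0 := by linarith
  -- s > |2a+b|
  have hsab : -2 * a - b < s := by nlinarith [mul_pos (neg_pos.2 ha) hg1]
  have hsab2 : 2 * a + b < s := by nlinarith [mul_pos (neg_pos.2 ha) hg1]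
  have hsb : s < b := by nlinarith [mul_pos (neg_pos.2 ha) (neg_pos.2 hc)]
  have hlth0 : 0 < (-b + s) / (2 * a) := by
    apply div_pos_of_neg_of_neg (by linarith) h2a
  have hlth1 : (-b + s) / (2 * a) < 1 := by
    rw [div_lt_iff_of_neg h2a]; linarith
  refine ⟨hD, ⟨hlth0, hlth1⟩, ?_⟩
  intro l hl hl1
  rw [div_lt_iff_of_neg h2a] at hl
  -- hl : l * (2 * a) < -b + s
  have hg : 0 < a * l ^ 2 + b * l + c := by
    have h1 : 2 * a * l + b < s := by nlinarith
    have h2 : -(2 * a * l + b) < s := by nlinarith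
    have h3 : 0 < (s - (2 * a * l + b)) * (s + (2 * a * l + b)) :=
      mul_pos (by linarith) (by linarith)
    have h4 : (s - (2 * a * l + b)) * (s + (2 * a * l + b))
        = -(4 * a) * (a * l ^ 2 + b * l + c) := by
      linear_combination hs2
    rw [h4] at h3
    have h5 : 0 < -(4 * a) := by linarith
    nlinarith [h3, h5]
  set y := 1 + ρ * (1 - l) * O_V with hy_def
  have hy1 : 1 ≤ y := by
    have : 0 ≤ ρ * (1 - l) * O_V := mul_nonneg (mul_nonneg hρ.le (by linarith)) hV.le
    linarith
  have hy0 : 0 < y := by linarith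
  have hkey : y ^ 2 < 1 + ρ * (O_H + O_V) / 2 +
      ρ ^ 2 * O_H * O_V * (l ^ 2 + (1 - l) ^ 2) / 4 := by
    have : (1 + ρ * (O_H + O_V) / 2 +
        ρ ^ 2 * O_H * O_V * (l ^ 2 + (1 - l) ^ 2) / 4) - y ^ 2
        = a * l ^ 2 + b * l + c := by
      rw [hy_def, ha_def, hb_def, hc_def]; ring
    linarith
  have := Real.logb_lt_logb (by norm_num : (1:ℝ) < 2) (by positivity : (0:ℝ) < y ^ 2) hkey
  rw [Real.logb_pow] at this
  push_cast at this
  linarith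
end

section
/- Let Ω be a probability space and let G₁₁, G₁₂, G₂₁, G₂₂ : Ω → ℂ be mutually independent random variables, each with E[G_{ij}] = 0 and E[|G_{ij}|²] < ∞. Let λ_V, λ_H ≥ 0 and ρ ∈ ℝ, and let G(ω) be the 2×2 complex matrix with entries G_{ij}(ω) and Λ = diag(λ_V, λ_H). Then E[(det(I₂ + ρ•G·Λ·G†)).re] = 1 + ρ·λ_V·E[|G₁₁|² + |G₂₁|²] + ρ·λ_H·E[|G₁₂|² + |G₂₂|²] + ρ²·λ_V·λ_H·(E[|G₁₁|²]·E[|G₂₂|²] + E[|G₁₂|²]·E[|G₂₁|²]). -/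
/-!
Pointwise, `det (1 + ρ • G Λ Gᴴ) = 1 + ρ tr (G Λ Gᴴ) + ρ² λ_V λ_H ‖det G‖²`, and
`‖det G‖² = ‖G₀₀‖²‖G₁₁‖² + ‖G₀₁‖²‖G₁₀‖² - 2 Re (G₀₀ conj G₀₁ conj G₁₀ G₁₁)`.
By independence the expectation of each product of entries factors into the product of the
expectations, so the last term has expectation `-2 Re (E G₀₀ conj (E G₀₁) conj (E G₁₀) E G₁₁)`,
which vanishes because the entries are centred.
-/

open MeasureTheory Matrix ProbabilityTheory ComplexConjugate

lemma Matrix.det_one_add_smul_mul_diagonal_mul_conjTranspose_fin_two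
    (M : Matrix (Fin 2) (Fin 2) ℂ) (a b ρ : ℝ) :
    (1 + ρ • (M * diagonal ![(a : ℂ), (b : ℂ)] * Mᴴ)).det =
      ((1 + ρ * a * (‖M 0 0‖ ^ 2 + ‖M 1 0‖ ^ 2) + ρ * b * (‖M 0 1‖ ^ 2 + ‖M 1 1‖ ^ 2)
        + ρ ^ 2 * a * b * ‖M.det‖ ^ 2 : ℝ) : ℂ) := by
  push_cast
  simp only [← Complex.mul_conj', det_fin_two, map_sub, map_mul, Matrix.add_apply,
    Matrix.smul_apply, one_apply_eq, one_apply_ne one_ne_zero, one_apply_ne zero_ne_one, mul_apply,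
    Fin.sum_univ_two, diagonal_apply_eq, diagonal_apply_ne _ one_ne_zero,
    diagonal_apply_ne _ zero_ne_one, conjTranspose_apply, RCLike.star_def, cons_val_zero,
    cons_val_one, cons_val_fin_one, Complex.real_smul]
  ring

lemma Matrix.norm_det_fin_two_sq (M : Matrix (Fin 2) (Fin 2) ℂ) :
    ‖M.det‖ ^ 2 = ‖M 0 0‖ ^ 2 * ‖M 1 1‖ ^ 2 + ‖M 0 1‖ ^ 2 * ‖M 1 0‖ ^ 2
      - 2 * (M 0 0 * conj (M 0 1) * conj (M 1 0) * M 1 1).re := by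
  simp only [det_fin_two, Complex.sq_norm, Complex.normSq_apply, Complex.mul_re, Complex.mul_im,
    Complex.sub_re, Complex.sub_im, Complex.conj_re, Complex.conj_im]
  ring

section

variable {Ω : Type*} [MeasurableSpace Ω] {μ : Measure Ω}

section NormSq

variable {E F : Type*} [NormedAddCommGroup E] [MeasurableSpace E] [OpensMeasurableSpace E]
  [NormedAddCommGroup F] [MeasurableSpace F] [OpensMeasurableSpace F] {X : Ω → E} {Y : Ω → F}

lemma ProbabilityTheory.IndepFun.integrable_norm_sq_mul_norm_sq (h : X ⟂ᵢ[μ] Y)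
    (hX : Integrable (fun ω => ‖X ω‖ ^ 2) μ) (hY : Integrable (fun ω => ‖Y ω‖ ^ 2) μ) :
    Integrable (fun ω => ‖X ω‖ ^ 2 * ‖Y ω‖ ^ 2) μ :=
  (h.comp (measurable_norm.pow_const 2) (measurable_norm.pow_const 2)).integrable_mul hX hY

lemma ProbabilityTheory.IndepFun.integral_norm_sq_mul_norm_sq (h : X ⟂ᵢ[μ] Y)
    (hX : AEMeasurable X μ) (hY : AEMeasurable Y μ) :
    ∫ ω, ‖X ω‖ ^ 2 * ‖Y ω‖ ^ 2 ∂μ = (∫ ω, ‖X ω‖ ^ 2 ∂μ) * ∫ ω, ‖Y ω‖ ^ 2 ∂μ :=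
  h.integral_fun_comp_mul_comp hX hY (continuous_norm.pow 2).aestronglyMeasurable
    (continuous_norm.pow 2).aestronglyMeasurable

end NormSq

variable {G : Ω → Matrix (Fin 2) (Fin 2) ℂ}

lemma integrable_norm_sq_mul_norm_sq_of_iIndepFun
    (hindep : iIndepFun (fun (p : Fin 2 × Fin 2) ω => G ω p.1 p.2) μ)
    (hL2 : ∀ i j, Integrable (fun ω => ‖G ω i j‖ ^ 2) μ) {i j k l : Fin 2} (h : (i, j) ≠ (k, l)) :
    Integrable (fun ω => ‖G ω i j‖ ^ 2 * ‖G ω k l‖ ^ 2) μ :=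
  (hindep.indepFun h).integrable_norm_sq_mul_norm_sq (hL2 i j) (hL2 k l)

lemma integral_mul_conj_mul_conj_mul_of_iIndepFun (hmeas : ∀ i j, Measurable fun ω => G ω i j)
    (hindep : iIndepFun (fun (p : Fin 2 × Fin 2) ω => G ω p.1 p.2) μ) :
    ∫ ω, G ω 0 0 * conj (G ω 0 1) * conj (G ω 1 0) * G ω 1 1 ∂μ =
      (∫ ω, G ω 0 0 ∂μ) * conj (∫ ω, G ω 0 1 ∂μ) * conj (∫ ω, G ω 1 0 ∂μ)
        * ∫ ω, G ω 1 1 ∂μ := by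
  have h := hindep.integral_fun_prod_comp (f := fun p z => if p.1 = p.2 then z else conj z)
    (fun p => (hmeas p.1 p.2).aemeasurable) (fun p => by split_ifs <;> fun_prop)
  simp only [Fintype.prod_prod_type, Fin.prod_univ_two] at h
  simpa [integral_conj, mul_assoc] using h

lemma integrable_mul_conj_mul_conj_mul_of_iIndepFun
    (hmeas : ∀ i j, Measurable fun ω => G ω i j)
    (hindep : iIndepFun (fun (p : Fin 2 × Fin 2) ω => G ω p.1 p.2) μ)
    (hL2 : ∀ i j, Integrable (fun ω => ‖G ω i j‖ ^ 2) μ) :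
    Integrable (fun ω => G ω 0 0 * conj (G ω 0 1) * conj (G ω 1 0) * G ω 1 1) μ := by
  have hAD : Integrable (fun ω => ‖G ω 0 0‖ ^ 2 * ‖G ω 1 1‖ ^ 2) μ :=
    integrable_norm_sq_mul_norm_sq_of_iIndepFun hindep hL2 (by decide)
  have hBC : Integrable (fun ω => ‖G ω 0 1‖ ^ 2 * ‖G ω 1 0‖ ^ 2) μ :=
    integrable_norm_sq_mul_norm_sq_of_iIndepFun hindep hL2 (by decide)
  refine (hAD.add hBC).mono' (by fun_prop) (ae_of_all _ fun ω => ?_)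
  simp only [Pi.add_apply, norm_mul, Complex.norm_conj]
  nlinarith [sq_nonneg (‖G ω 0 0‖ * ‖G ω 1 1‖ - ‖G ω 0 1‖ * ‖G ω 1 0‖)]

lemma integrable_norm_det_sq_of_iIndepFun (hmeas : ∀ i j, Measurable fun ω => G ω i j)
    (hindep : iIndepFun (fun (p : Fin 2 × Fin 2) ω => G ω p.1 p.2) μ)
    (hL2 : ∀ i j, Integrable (fun ω => ‖G ω i j‖ ^ 2) μ) :
    Integrable (fun ω => ‖(G ω).det‖ ^ 2) μ := by
  simp_rw [norm_det_fin_two_sq]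
  exact ((integrable_norm_sq_mul_norm_sq_of_iIndepFun hindep hL2 (by decide)).fun_add
    (integrable_norm_sq_mul_norm_sq_of_iIndepFun hindep hL2 (by decide))).sub'
    ((integrable_mul_conj_mul_conj_mul_of_iIndepFun hmeas hindep hL2).re.const_mul 2)

lemma integral_norm_det_sq_of_iIndepFun (hmeas : ∀ i j, Measurable fun ω => G ω i j)
    (hindep : iIndepFun (fun (p : Fin 2 × Fin 2) ω => G ω p.1 p.2) μ)
    (hL2 : ∀ i j, Integrable (fun ω => ‖G ω i j‖ ^ 2) μ) :
    ∫ ω, ‖(G ω).det‖ ^ 2 ∂μ =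
      (∫ ω, ‖G ω 0 0‖ ^ 2 ∂μ) * (∫ ω, ‖G ω 1 1‖ ^ 2 ∂μ)
        + (∫ ω, ‖G ω 0 1‖ ^ 2 ∂μ) * (∫ ω, ‖G ω 1 0‖ ^ 2 ∂μ)
        - 2 * ((∫ ω, G ω 0 0 ∂μ) * conj (∫ ω, G ω 0 1 ∂μ) * conj (∫ ω, G ω 1 0 ∂μ)
          * ∫ ω, G ω 1 1 ∂μ).re := by
  have hAD : Integrable (fun ω => ‖G ω 0 0‖ ^ 2 * ‖G ω 1 1‖ ^ 2) μ :=
    integrable_norm_sq_mul_norm_sq_of_iIndepFun hindep hL2 (by decide)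
  have hBC : Integrable (fun ω => ‖G ω 0 1‖ ^ 2 * ‖G ω 1 0‖ ^ 2) μ :=
    integrable_norm_sq_mul_norm_sq_of_iIndepFun hindep hL2 (by decide)
  have hcross := integrable_mul_conj_mul_conj_mul_of_iIndepFun hmeas hindep hL2
  have hcross_re : Integrable
      (fun ω => (G ω 0 0 * conj (G ω 0 1) * conj (G ω 1 0) * G ω 1 1).re) μ := hcross.re
  have h_integral_re : ∫ ω, (G ω 0 0 * conj (G ω 0 1) * conj (G ω 1 0) * G ω 1 1).re ∂μ =
      (∫ ω, G ω 0 0 * conj (G ω 0 1) * conj (G ω 1 0) * G ω 1 1 ∂μ).re := integral_re hcross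
  simp_rw [norm_det_fin_two_sq]
  rw [integral_sub (hAD.fun_add hBC) (hcross_re.const_mul 2), integral_add hAD hBC,
    (hindep.indepFun (i := (0, 0)) (j := (1, 1)) (by decide)).integral_norm_sq_mul_norm_sq
      (hmeas 0 0).aemeasurable (hmeas 1 1).aemeasurable,
    (hindep.indepFun (i := (0, 1)) (j := (1, 0)) (by decide)).integral_norm_sq_mul_norm_sq
      (hmeas 0 1).aemeasurable (hmeas 1 0).aemeasurable,
    integral_const_mul, h_integral_re, integral_mul_conj_mul_conj_mul_of_iIndepFun hmeas hindep]

end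

theorem stmt_15_general {Ω : Type*} [MeasureSpace Ω] [IsProbabilityMeasure (volume : Measure Ω)]
    (G : Ω → Matrix (Fin 2) (Fin 2) ℂ)
    (hmeas : ∀ i j, Measurable fun ω => G ω i j)
    (hindep : ProbabilityTheory.iIndepFun
      (fun (p : Fin 2 × Fin 2) ω => G ω p.1 p.2) volume)
    (hmean : ∀ i j, (∫ ω, G ω i j) = 0)
    (hL2 : ∀ i j, Integrable fun ω => ‖G ω i j‖ ^ 2)
    (lV lH ρ : ℝ) :
    (∫ ω, ((1 + ρ • (G ω * Matrix.diagonal ![(lV : ℂ), (lH : ℂ)] * (G ω)ᴴ)).det).re) =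
      1 + ρ * lV * (∫ ω, (‖G ω 0 0‖ ^ 2 + ‖G ω 1 0‖ ^ 2))
        + ρ * lH * (∫ ω, (‖G ω 0 1‖ ^ 2 + ‖G ω 1 1‖ ^ 2))
        + ρ ^ 2 * lV * lH * ((∫ ω, ‖G ω 0 0‖ ^ 2) * (∫ ω, ‖G ω 1 1‖ ^ 2)
          + (∫ ω, ‖G ω 0 1‖ ^ 2) * (∫ ω, ‖G ω 1 0‖ ^ 2)) := by
  have hV := ((hL2 0 0).fun_add (hL2 1 0)).const_mul (ρ * lV)
  have hH := ((hL2 0 1).fun_add (hL2 1 1)).const_mul (ρ * lH)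
  have hdet := (integrable_norm_det_sq_of_iIndepFun hmeas hindep hL2).const_mul (ρ ^ 2 * lV * lH)
  simp_rw [det_one_add_smul_mul_diagonal_mul_conjTranspose_fin_two, Complex.ofReal_re]
  rw [integral_add (((integrable_const 1).fun_add hV).fun_add hH) hdet,
    integral_add ((integrable_const 1).fun_add hV) hH, integral_add (integrable_const 1) hV,
    integral_const_mul, integral_const_mul, integral_const_mul,
    integral_norm_det_sq_of_iIndepFun hmeas hindep hL2, hmean 0 0]
  simp

theorem stmt_15 {Ω : Type*} [MeasureSpace Ω] [IsProbabilityMeasure (volume : Measure Ω)]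
    (G : Ω → Matrix (Fin 2) (Fin 2) ℂ)
    (hmeas : ∀ i j, Measurable fun ω => G ω i j)
    (hindep : ProbabilityTheory.iIndepFun
      (fun (p : Fin 2 × Fin 2) ω => G ω p.1 p.2) volume)
    (hmean : ∀ i j, (∫ ω, G ω i j) = 0)
    (hL2 : ∀ i j, Integrable fun ω => ‖G ω i j‖ ^ 2)
    (lV lH ρ : ℝ) (hlV : 0 ≤ lV) (hlH : 0 ≤ lH) :
    (∫ ω, ((1 + ρ • (G ω * Matrix.diagonal ![(lV : ℂ), (lH : ℂ)] * (G ω)ᴴ)).det).re) =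
      1 + ρ * lV * (∫ ω, (‖G ω 0 0‖ ^ 2 + ‖G ω 1 0‖ ^ 2))
        + ρ * lH * (∫ ω, (‖G ω 0 1‖ ^ 2 + ‖G ω 1 1‖ ^ 2))
        + ρ ^ 2 * lV * lH * ((∫ ω, ‖G ω 0 0‖ ^ 2) * (∫ ω, ‖G ω 1 1‖ ^ 2)
          + (∫ ω, ‖G ω 0 1‖ ^ 2) * (∫ ω, ‖G ω 1 0‖ ^ 2)) :=
  stmt_15_general G hmeas hindep hmean hL2 lV lH ρ
end
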